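/- Let (c₁,c₂) ∈ ℝ². If the polynomial D₂(c₁,c₂;·) has a complex root with real part equal to −1/2, then (45 + 12c₁ + c₁² − c₂)·(105/16 + (19/2)c₁ + c₂) = 0. -/

import Mathlib

/-!
On the line `z = -1/2 + t i` the imaginary part of `D₂` is `-8t(11/4 + c₁ - t²)`. If `t = 0`, the
real part is `D₂(-1/2) = 105/16 + (19/2)c₁ + c₂`. Otherwise `t² = 11/4 + c₁`, and the real part
`(t² - 11/4 - c₁)(t² - 75/4 - c₁) - (45 + 12c₁ + c₁² - c₂)` gives the other factor.
-/

noncomputable section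

/-- The quartic polynomial `D₂(c₁,c₂;z) = z(z-1)(z-2)(z-3) + c₁[z(z-1)+(z-2)(z-3)] + c₂`. -/
def D2 (c₁ c₂ : ℝ) (z : ℂ) : ℂ :=
  z * (z - 1) * (z - 2) * (z - 3) + (c₁ : ℂ) * (z * (z - 1) + (z - 2) * (z - 3)) + (c₂ : ℂ)

end

open Complex

theorem D2_neg_half_add_mul_I (c₁ c₂ t : ℝ) :
    D2 c₁ c₂ (-1/2 + t * I) =
      ((t ^ 4 - (43/2 + 2 * c₁) * t ^ 2 + 105/16 + 19/2 * c₁ + c₂ : ℝ) : ℂ)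
        + ((-8 * t * (11/4 + c₁ - t ^ 2) : ℝ) : ℂ) * I := by
  unfold D2
  push_cast
  linear_combination (t ^ 4 * (I ^ 2 - 1) - 8 * I * t ^ 3 + (43/2 + 2 * c₁) * t ^ 2) * I_sq

theorem D2_neg_half_add_mul_I_eq_zero_iff (c₁ c₂ t : ℝ) :
    D2 c₁ c₂ (-1/2 + t * I) = 0 ↔
      t ^ 4 - (43/2 + 2 * c₁) * t ^ 2 + 105/16 + 19/2 * c₁ + c₂ = 0 ∧
        t * (11/4 + c₁ - t ^ 2) = 0 := by
  rw [D2_neg_half_add_mul_I, Complex.ext_iff]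
  simp only [add_re, add_im, ofReal_re, ofReal_im, re_ofReal_mul, im_ofReal_mul, I_re, I_im,
    zero_re, zero_im, mul_zero, mul_one, add_zero, zero_add, mul_assoc, mul_eq_zero]
  norm_num

theorem stmt2 (c₁ c₂ : ℝ)
    (h : ∃ z : ℂ, D2 c₁ c₂ z = 0 ∧ z.re = -1/2) :
    (45 + 12 * c₁ + c₁ ^ 2 - c₂) * (105/16 + (19/2) * c₁ + c₂) = 0 := by
  obtain ⟨z, hz, hre⟩ := h
  have hz_line : z = -1/2 + z.im * I := Complex.ext (by simp [hre]) (by simp)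
  rw [hz_line, D2_neg_half_add_mul_I_eq_zero_iff] at hz
  obtain ⟨hreal, himag⟩ := hz
  rcases mul_eq_zero.mp himag with ht | ht_sq
  · exact mul_eq_zero_of_right _ (by simpa [ht] using hreal)
  · exact mul_eq_zero_of_left
      (by linear_combination (75/4 + c₁ - z.im ^ 2) * ht_sq - hreal) _
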